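/- arXiv:1612.04476 — 4 statements merged into one kernel-verified Lean document; each statement's English description precedes it below -/
import Mathlib

section
/- Let n ≥ 4, 1 < k < n−1, τ = (1 2 ... n), φ the reversal of {1,...,k}, and π = τφτ⁻¹φ. If k is even, then π is the (k+1)-cycle (1 3 5 ... k+1 2 4 ... k); if k is odd, then π is the product of the two disjoint (k+1)/2-cycles (1 3 5 ... k)(2 4 ... k+1). -/
/-!
Conjugating the flip of positions `1, …, k` by the rotation `τ` gives the flip of positions
`2, …, k + 1`. Composing the two flips, `π` sends `i ↦ i + 2` for `i ≤ k - 1`, `k ↦ 1`,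
`k + 1 ↦ 2`, and fixes everything else. Reading off the orbits of this map gives the single
cycle `(1 3 … k+1 2 4 … k)` when `k` is even and the two cycles `(1 3 … k)(2 4 … k+1)` when
`k` is odd.
-/

/-- The flip of the oval track puzzle: reverses the block of the first `k`
positions (0-indexed `0,…,k-1`, i.e. tiles `1,…,k`) and fixes the rest. -/
def otFlip (n k : ℕ) : Equiv.Perm (Fin n) :=
  Function.Involutive.toPerm
    (fun i => if h : i.val < k ∧ k ≤ n then ⟨k - 1 - i.val, by omega⟩ else i)
    (by
      intro i
      dsimp only
      by_cases h1 : i.val < k ∧ k ≤ n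
      · rw [dif_pos h1]
        rw [dif_pos (show (⟨k - 1 - i.val, by omega⟩ : Fin n).val < k ∧ k ≤ n from
          ⟨by simp; omega, h1.2⟩)]
        exact Fin.ext (by simp; omega)
      · rw [dif_neg h1, dif_neg h1])

/-- The cycle on `Fin n` given (0-indexed) by a list of natural numbers. -/
def otCycle (n : ℕ) (l : List ℕ) : Equiv.Perm (Fin n) :=
  (l.filterMap (fun a => if h : a < n then some ⟨a, h⟩ else none)).formPerm

/-- Type I: preserves the parity of every tile label. -/
def TypeI (n : ℕ) (σ : Equiv.Perm (Fin n)) : Prop :=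
  ∀ i : Fin n, (σ i).val % 2 = i.val % 2

/-- Type II: reverses the parity of every tile label. -/
def TypeII (n : ℕ) (σ : Equiv.Perm (Fin n)) : Prop :=
  ∀ i : Fin n, (σ i).val % 2 ≠ i.val % 2

lemma map_val_filterMap {n : ℕ} {l : List ℕ} (hl : ∀ a ∈ l, a < n) :
    (l.filterMap fun a => if h : a < n then some (⟨a, h⟩ : Fin n) else none).map Fin.val =
      l := by
  rw [List.map_filterMap]
  conv_rhs => rw [← List.filterMap_some (l := l)]
  refine List.filterMap_congr fun a ha => ?_
  simp [hl a ha]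

lemma otCycle_apply_val {n : ℕ} {l : List ℕ} (hl : ∀ a ∈ l, a < n) (hnd : l.Nodup)
    {m : ℕ} (hm : m < l.length) {x : Fin n} (hx : x.val = l[m]) :
    (otCycle n l x).val = if h : m + 1 < l.length then l[m + 1] else l[0] := by
  set L := l.filterMap fun a => if h : a < n then some (⟨a, h⟩ : Fin n) else none
  have hL : L.map Fin.val = l := map_val_filterMap hl
  have hlen : L.length = l.length := by rw [← hL, List.length_map]
  have hval : ∀ i (hi : i < L.length), L[i].val = l[i] := fun i hi => by
    rw [List.getElem_of_eq hL.symm, List.getElem_map]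
  have hxL : x = L[m] := Fin.ext (by rw [hx, hval])
  rw [otCycle, hxL, List.formPerm_apply_getElem _ ((hL ▸ hnd).of_map _), hval]
  split_ifs with h
  · congr 1
    rw [hlen, Nat.mod_eq_of_lt h]
  · congr 1
    rw [hlen, show m + 1 = l.length by omega, Nat.mod_self]

lemma otCycle_apply_of_notMem {n : ℕ} {l : List ℕ} {x : Fin n} (hx : x.val ∉ l) :
    otCycle n l x = x := by
  refine List.formPerm_apply_of_notMem fun hmem => hx ?_
  obtain ⟨a, ha, h⟩ := List.mem_filterMap.mp hmem
  split at h
  · cases h; exact ha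
  · cases h

lemma otFlip_apply_val {n k : ℕ} (hk : k ≤ n) (x : Fin n) :
    (otFlip n k x).val = if x.val < k then k - 1 - x.val else x.val := by
  change (if h : x.val < k ∧ k ≤ n then (⟨k - 1 - x.val, by omega⟩ : Fin n) else x).val = _
  by_cases h : x.val < k
  · rw [dif_pos ⟨h, hk⟩, if_pos h]
  · rw [dif_neg (fun hc => h hc.1), if_neg h]

lemma finRotate_mul_otFlip_mul_inv_apply_val {n k : ℕ} (hk : k < n) (x : Fin n) :
    ((finRotate n * otFlip n k * (finRotate n)⁻¹) x).val =
      if 0 < x.val ∧ x.val ≤ k then k + 1 - x.val else x.val := by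
  obtain ⟨m, rfl⟩ : ∃ m, n = m + 1 := ⟨n - 1, by omega⟩
  simp only [Equiv.Perm.mul_apply, Equiv.Perm.inv_def, finRotate_symm_apply, coe_finRotate,
    Fin.ext_iff, otFlip_apply_val hk.le, Fin.coe_sub_one, Fin.val_last, Fin.val_zero]
  split_ifs <;> omega

def shuffleVal (k i : ℕ) : ℕ :=
  if i < k - 1 then i + 2 else if i = k - 1 then 0 else if i = k then 1 else i

lemma shuffle_apply_val {n k : ℕ} (hk : k < n) (x : Fin n) :
    ((finRotate n * otFlip n k * (finRotate n)⁻¹ * otFlip n k) x).val = shuffleVal k x := by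
  rw [Equiv.Perm.mul_apply, finRotate_mul_otFlip_mul_inv_apply_val hk, otFlip_apply_val hk.le,
    shuffleVal]
  split_ifs <;> omega

lemma otCycle_map_two_mul_add_apply_val {n q r : ℕ} (hq : r + 2 * q ≤ n + 1) (x : Fin n) :
    (otCycle n ((List.range q).map fun j => 2 * j + r) x).val =
      if r ≤ x.val ∧ (x.val - r) % 2 = 0 ∧ x.val < r + 2 * q then
        (if x.val + 2 < r + 2 * q then x.val + 2 else r)
      else x.val := by
  have hl : ∀ a ∈ (List.range q).map (fun j => 2 * j + r), a < n := by
    simp only [List.mem_map, List.mem_range]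
    omega
  have hnd : ((List.range q).map fun j => 2 * j + r).Nodup :=
    List.nodup_range.map fun a b h => by omega
  by_cases hx : r ≤ x.val ∧ (x.val - r) % 2 = 0 ∧ x.val < r + 2 * q
  · rw [otCycle_apply_val hl hnd (m := (x.val - r) / 2)
      (by simp only [List.length_map, List.length_range]; omega)
      (by simp only [List.getElem_map, List.getElem_range]; omega)]
    simp only [List.getElem_map, List.getElem_range, List.length_map, List.length_range]
    split_ifs <;> omega
  · rw [otCycle_apply_of_notMem, if_neg hx]
    simp only [List.mem_map, List.mem_range]
    omega

lemma otCycle_evens_mul_odds_apply_val {n k : ℕ} (hk : Odd k) (hkn : k < n) (x : Fin n) :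
    ((otCycle n ((List.range ((k + 1) / 2)).map fun j => 2 * j) *
        otCycle n ((List.range ((k + 1) / 2)).map fun j => 2 * j + 1)) x).val =
      shuffleVal k x := by
  have hevens := otCycle_map_two_mul_add_apply_val (n := n) (q := (k + 1) / 2) (r := 0) (by omega)
  simp only [add_zero] at hevens
  obtain ⟨j, rfl⟩ := hk
  rw [Equiv.Perm.mul_apply, hevens,
    otCycle_map_two_mul_add_apply_val (q := (2 * j + 1 + 1) / 2) (r := 1) (by omega), shuffleVal]
  grind

lemma otCycle_evens_append_odds_apply_val {n k : ℕ} (hk : Even k) (hkn : k < n) (x : Fin n) :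
    (otCycle n ((List.range (k / 2 + 1)).map (fun j => 2 * j) ++
        (List.range (k / 2)).map (fun j => 2 * j + 1)) x).val = shuffleVal k x := by
  obtain ⟨j, rfl⟩ := hk
  set L := (List.range ((j + j) / 2 + 1)).map (fun i => 2 * i) ++
    (List.range ((j + j) / 2)).map (fun i => 2 * i + 1) with hL
  have hl : ∀ a ∈ L, a < n := by
    simp only [hL, List.mem_append, List.mem_map, List.mem_range]
    omega
  have hnd : L.Nodup :=
    (List.nodup_range.map fun a b h => by omega).append (List.nodup_range.map fun a b h => by omega)
      fun a ha hb => by simp only [List.mem_map, List.mem_range] at ha hb; omega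
  have hgetElem : ∀ m (hm : m < L.length),
      L[m] = if m < j + 1 then 2 * m else 2 * (m - (j + 1)) + 1 := fun m hm => by
    simp only [hL, List.getElem_append, List.getElem_map, List.getElem_range, List.length_map,
      List.length_range]
    split_ifs <;> omega
  have hlen : L.length = j + j + 1 := by
    simp only [hL, List.length_append, List.length_map, List.length_range]
    omega
  by_cases hx : x.val ≤ j + j
  · rw [otCycle_apply_val hl hnd (m := if x.val % 2 = 0 then x.val / 2 else j + 1 + x.val / 2)
      (by split_ifs <;> omega) (by rw [hgetElem]; split_ifs <;> omega)]
    simp only [hgetElem, hlen, shuffleVal]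
    split_ifs <;> omega
  · rw [otCycle_apply_of_notMem, shuffleVal]
    · split_ifs <;> omega
    · simp only [hL, List.mem_append, List.mem_map, List.mem_range]
      omega

theorem stmt10_general (n k : ℕ) (hk2 : k < n - 1) :
    (Even k →
      finRotate n * otFlip n k * (finRotate n)⁻¹ * otFlip n k =
        otCycle n ((List.range (k / 2 + 1)).map (fun j => 2 * j) ++
          (List.range (k / 2)).map (fun j => 2 * j + 1))) ∧
    (Odd k →
      finRotate n * otFlip n k * (finRotate n)⁻¹ * otFlip n k =
        otCycle n ((List.range ((k + 1) / 2)).map (fun j => 2 * j)) *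
          otCycle n ((List.range ((k + 1) / 2)).map (fun j => 2 * j + 1))) := by
  have hkn : k < n := by omega
  refine ⟨fun hk => ?_, fun hk => ?_⟩ <;> ext x
  · rw [shuffle_apply_val hkn, otCycle_evens_append_odds_apply_val hk hkn]
  · rw [shuffle_apply_val hkn, otCycle_evens_mul_odds_apply_val hk hkn]

theorem stmt10 (n k : ℕ) (hn : 4 ≤ n) (hk1 : 1 < k) (hk2 : k < n - 1) :
    (Even k →
      finRotate n * otFlip n k * (finRotate n)⁻¹ * otFlip n k =
        otCycle n ((List.range (k / 2 + 1)).map (fun j => 2 * j) ++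
          (List.range (k / 2)).map (fun j => 2 * j + 1))) ∧
    (Odd k →
      finRotate n * otFlip n k * (finRotate n)⁻¹ * otFlip n k =
        otCycle n ((List.range ((k + 1) / 2)).map (fun j => 2 * j)) *
          otCycle n ((List.range ((k + 1) / 2)).map (fun j => 2 * j + 1))) :=
  stmt10_general n k hk2
end

section
/- Let n ≥ 4, 1 < k < n−1 with k even, and π = τφτ⁻¹φ the shuffle. Then π^{k/2} is the consecutive (k+1)-cycle (k+1 k k−1 ... 2 1). -/
/-!
Conjugating the flip `φ` of the positions `0, …, k-1` by the rotation `τ` gives the flip of the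
positions `1, …, k`, and the product of these two reflections is `c²`, where `c = (0 1 … k)` is
`Fin.cycleRange k`. Hence `π ^ (k / 2) = c ^ k = c⁻¹`, the cycle of the reversed list.
-/

open Equiv

lemma val_otFlip (n k : ℕ) (i : Fin n) :
    (otFlip n k i : ℕ) = if i.val < k ∧ k ≤ n then k - 1 - i.val else i.val := by
  unfold otFlip
  split_ifs with h <;> simp [Function.Involutive.toPerm, h]

lemma val_finRotate {n : ℕ} (i : Fin n) :
    (finRotate n i : ℕ) = if i.val + 1 = n then 0 else i.val + 1 := by
  cases n with
  | zero => exact i.elim0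
  | succ m => simp only [coe_finRotate, Fin.ext_iff, Fin.val_last, add_left_inj]

lemma val_finRotate_symm {n : ℕ} (i : Fin n) :
    ((finRotate n).symm i : ℕ) = if i.val = 0 then n - 1 else i.val - 1 := by
  obtain ⟨j, rfl⟩ := (finRotate n).surjective i
  rw [Equiv.symm_apply_apply, val_finRotate]
  grind

lemma Fin.val_cycleRange {n : ℕ} (i j : Fin n) :
    (Fin.cycleRange i j : ℕ) =
      if j.val < i.val then j.val + 1 else if j.val = i.val then 0 else j.val := by
  rcases le_or_gt j i with h | h
  · rw [Fin.coe_cycleRange_of_le h]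
    simp only [Fin.ext_iff]
    rw [Fin.le_def] at h
    split_ifs <;> omega
  · rw [Fin.cycleRange_of_gt h]
    rw [Fin.lt_def] at h
    split_ifs <;> omega

lemma Fin.cycleRange_pow_succ {n : ℕ} (i : Fin n) : Fin.cycleRange i ^ (i.val + 1) = 1 := by
  have : NeZero n := ⟨i.pos.ne'⟩
  rcases eq_or_ne i 0 with rfl | h0
  · simp
  · have h : orderOf (Fin.cycleRange i) = i.val + 1 := by
      rw [← Perm.lcm_cycleType, Fin.cycleType_cycleRange h0, Multiset.lcm_singleton,
        normalize_eq]
    rw [← h, pow_orderOf_eq_one]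

lemma finRotate_mul_otFlip_mul_inv_mul_otFlip {n k : ℕ} (hk : k < n) :
    finRotate n * otFlip n k * (finRotate n)⁻¹ * otFlip n k = Fin.cycleRange ⟨k, hk⟩ ^ 2 := by
  ext x
  simp only [Perm.mul_apply, sq, Perm.inv_def, val_otFlip, val_finRotate, val_finRotate_symm,
    Fin.val_cycleRange]
  have := x.isLt
  split_ifs <;> omega

lemma otCycle_reverse (n : ℕ) (l : List ℕ) : otCycle n l.reverse = (otCycle n l)⁻¹ := by
  rw [otCycle, otCycle, List.filterMap_reverse, List.formPerm_reverse]

lemma otCycle_eq_formPerm_pmap {n : ℕ} (l : List ℕ) (hl : ∀ a ∈ l, a < n) :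
    otCycle n l = (l.pmap Fin.mk hl).formPerm := by
  rw [otCycle]
  congr 1
  induction l with
  | nil => rfl
  | cons a l ih =>
    rw [List.filterMap_cons, dif_pos (hl a List.mem_cons_self), List.pmap_cons,
      ih fun b hb => hl b (List.mem_cons_of_mem _ hb)]

lemma otCycle_range_succ {n k : ℕ} (hk : k < n) :
    otCycle n (List.range (k + 1)) = Fin.cycleRange ⟨k, hk⟩ := by
  have hlt : ∀ a ∈ List.range (k + 1), a < n := fun a ha => by
    rw [List.mem_range] at ha; omega
  set L := (List.range (k + 1)).pmap Fin.mk hlt with hL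
  have hnodup : L.Nodup := List.nodup_range.pmap fun _ _ _ _ => Fin.val_eq_of_eq
  have hlen : L.length = k + 1 := by simp [L]
  rw [otCycle_eq_formPerm_pmap _ hlt, ← hL]
  ext x : 1
  rw [Fin.ext_iff, Fin.val_cycleRange]
  dsimp only
  by_cases hx : x.val ≤ k
  · have hx' : L[x.val]'(by omega) = x := by simp [L]
    rw [← hx', List.formPerm_apply_getElem _ hnodup]
    simp only [L, List.getElem_pmap, List.getElem_range, hlen]
    rcases hx.lt_or_eq with h | h
    · rw [if_pos h, Nat.mod_eq_of_lt (by omega)]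
    · rw [if_neg h.not_lt, if_pos h, h, Nat.mod_self]
  · have hxL : x ∉ L := by
      rw [hL, List.mem_pmap]
      rintro ⟨a, ha, rfl⟩
      exact hx (Nat.lt_succ_iff.mp (List.mem_range.mp ha))
    rw [List.formPerm_apply_of_notMem hxL, if_neg (by omega), if_neg (by omega)]

theorem stmt12_general (n k : ℕ) (hk2 : k < n - 1)
    (hke : Even k) :
    (finRotate n * otFlip n k * (finRotate n)⁻¹ * otFlip n k) ^ (k / 2) =
      otCycle n (List.range (k + 1)).reverse := by
  have hk : k < n := by omega
  have hord := Fin.cycleRange_pow_succ ⟨k, hk⟩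
  rw [finRotate_mul_otFlip_mul_inv_mul_otFlip hk, otCycle_reverse, otCycle_range_succ hk,
    ← pow_mul, Nat.mul_div_cancel' hke.two_dvd]
  exact eq_inv_of_mul_eq_one_left (by rwa [← pow_succ])

theorem stmt12 (n k : ℕ) (hn : 4 ≤ n) (hk1 : 1 < k) (hk2 : k < n - 1)
    (hke : Even k) :
    (finRotate n * otFlip n k * (finRotate n)⁻¹ * otFlip n k) ^ (k / 2) =
      otCycle n (List.range (k + 1)).reverse :=
  stmt12_general n k hk2 hke
end

section
/- Let n ≥ 4, 1 < k < n−1 with k odd, and π = τφτ⁻¹φ. Then πτπ⁻¹τ⁻¹ is the 3-cycle (1 3 k+2). -/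
/-!
Conjugating the flip of the block `0, …, k-1` by the rotation `τ` gives the flip of the block
`1, …, k`, so `π` sends `i ↦ i + 2` for `i + 2 ≤ k`, `k - 1 ↦ 0`, `k ↦ 1`, and fixes everything
else. Since `πτπ⁻¹τ⁻¹ = π (τπτ⁻¹)⁻¹`, the claim says `π = (0 2 k+1) · τπτ⁻¹`, and `τπτ⁻¹` is the
same description shifted up by one, so both sides can be compared value by value.
-/

open Equiv

lemma finRotate_val {n : ℕ} (i : Fin n) :
    (finRotate n i).val = if i.val + 1 = n then 0 else i.val + 1 := by
  obtain ⟨m, rfl⟩ : ∃ m, n = m + 1 := ⟨n - 1, by have := i.isLt; omega⟩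
  rw [coe_finRotate]
  simp only [Fin.ext_iff, Fin.val_last, Nat.succ_eq_add_one, add_left_inj]

lemma finRotate_inv_val {n : ℕ} (i : Fin n) :
    ((finRotate n)⁻¹ i).val = if i.val = 0 then n - 1 else i.val - 1 := by
  have h := finRotate_val ((finRotate n)⁻¹ i)
  simp only [Perm.coe_inv, apply_symm_apply] at h ⊢
  have := ((finRotate n).symm i).isLt
  split_ifs at h ⊢ <;> omega

lemma finRotate_conj_val {n : ℕ} {σ : Perm (Fin n)} (hσ : ∀ j : Fin n, j.val + 1 = n → σ j = j)
    (i : Fin n) :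
    ((finRotate n * σ * (finRotate n)⁻¹) i).val =
      if i.val = 0 then 0 else (σ ((finRotate n)⁻¹ i)).val + 1 := by
  rw [Perm.mul_apply, Perm.mul_apply, finRotate_val]
  set j := (finRotate n)⁻¹ i
  have hj : j.val = if i.val = 0 then n - 1 else i.val - 1 := finRotate_inv_val i
  have hσj : (σ j).val + 1 = n ↔ j.val + 1 = n := by
    refine ⟨fun h => ?_, fun h => by rw [hσ j h]; exact h⟩
    rwa [σ.injective (hσ _ h)] at h
  have := i.isLt
  split_ifs at hj ⊢ <;> omega

lemma otFlip_val (n k : ℕ) (i : Fin n) :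
    (otFlip n k i).val = if i.val < k ∧ k ≤ n then k - 1 - i.val else i.val := by
  simp only [otFlip, Function.Involutive.toPerm, coe_fn_mk]
  split_ifs <;> rfl

lemma otFlip_apply_of_le {n k : ℕ} {i : Fin n} (hi : k ≤ i.val) : otFlip n k i = i :=
  Fin.ext (by rw [otFlip_val, if_neg (by omega)])

lemma finRotate_conj_otFlip_val {n k : ℕ} (hk : k < n) (i : Fin n) :
    ((finRotate n * otFlip n k * (finRotate n)⁻¹) i).val =
      if 1 ≤ i.val ∧ i.val ≤ k then k + 1 - i.val else i.val := by
  have hfix (j : Fin n) (hj : j.val + 1 = n) : otFlip n k j = j := otFlip_apply_of_le (by omega)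
  rw [finRotate_conj_val hfix, otFlip_val, finRotate_inv_val]
  split_ifs <;> omega

def otPi (n k : ℕ) : Perm (Fin n) :=
  finRotate n * otFlip n k * (finRotate n)⁻¹ * otFlip n k

lemma otPi_val {n k : ℕ} (hk0 : 0 < k) (hk : k < n) (i : Fin n) :
    (otPi n k i).val =
      if i.val + 2 ≤ k then i.val + 2 else if i.val + 1 = k then 0
      else if i.val = k then 1 else i.val := by
  rw [otPi, Perm.mul_apply, finRotate_conj_otFlip_val hk, otFlip_val]
  split_ifs <;> omega

lemma otPi_apply_of_lt {n k : ℕ} (hk0 : 0 < k) (hk : k < n) {i : Fin n} (hi : k < i.val) :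
    otPi n k i = i :=
  Fin.ext (by rw [otPi_val hk0 hk]; split_ifs <;> omega)

lemma otCycle_three_val {n a b c : ℕ} (ha : a < n) (hb : b < n) (hc : c < n)
    (hab : a ≠ b) (hbc : b ≠ c) (hac : a ≠ c) (i : Fin n) :
    (otCycle n [a, b, c] i).val =
      if i.val = a then b else if i.val = b then c else if i.val = c then a else i.val := by
  simp only [otCycle, List.filterMap_cons, List.filterMap_nil, dif_pos ha, dif_pos hb, dif_pos hc,
    List.formPerm_cons_cons, List.formPerm_singleton, mul_one, Perm.mul_apply, swap_apply_def,
    Fin.ext_iff]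
  grind

theorem stmt15_general (n k : ℕ) (hk1 : 1 < k) (hk2 : k < n - 1) :
    (finRotate n * otFlip n k * (finRotate n)⁻¹ * otFlip n k) * finRotate n *
        (finRotate n * otFlip n k * (finRotate n)⁻¹ * otFlip n k)⁻¹ * (finRotate n)⁻¹ =
      otCycle n [0, 2, k + 1] := by
  change otPi n k * finRotate n * (otPi n k)⁻¹ * (finRotate n)⁻¹ = _
  rw [show otPi n k * finRotate n * (otPi n k)⁻¹ * (finRotate n)⁻¹ =
      otPi n k * (finRotate n * otPi n k * (finRotate n)⁻¹)⁻¹ by group, mul_inv_eq_iff_eq_mul]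
  have hπ := otPi_val (n := n) (k := k) (by omega) (by omega)
  have hfix (j : Fin n) (hj : j.val + 1 = n) : otPi n k j = j :=
    otPi_apply_of_lt (by omega) (by omega) (by omega)
  ext i
  rw [Perm.mul_apply, otCycle_three_val (by omega) (by omega) (by omega) (by omega) (by omega)
      (by omega), finRotate_conj_val hfix, hπ, hπ, finRotate_inv_val]
  grind

theorem stmt15 (n k : ℕ) (hn : 4 ≤ n) (hk1 : 1 < k) (hk2 : k < n - 1)
    (hko : Odd k) :
    (finRotate n * otFlip n k * (finRotate n)⁻¹ * otFlip n k) * finRotate n *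
        (finRotate n * otFlip n k * (finRotate n)⁻¹ * otFlip n k)⁻¹ * (finRotate n)⁻¹ =
      otCycle n [0, 2, k + 1] :=
  stmt15_general n k hk1 hk2
end

section
/- Let n ≥ 4 and 1 < k < n−1. If n and k are both even, or if n is odd, then the alternating group A_n is contained in OT_{n,k} = ⟨τ, φ⟩. -/
/-!
Write τ = `finRotate n`, φ = `otFlip n k` and H = ⟨τ, φ⟩. A direct computation gives
(φτ)² = (τφ)² c with c the 3-cycle 0 ↦ n-2 ↦ k-1 ↦ 0, so c ∈ H, and by Jordan's theorem it
suffices to show that H is primitive. Let B be a block of H containing 0 with at least two points.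
If c • B ≠ B then B and c • B would be disjoint subsets of the three-point support of c, so
c • B = B and B contains n-2 and k-1. A block containing 0 and x is stabilised by τ^x, so B is
stabilised by τ^g with g = gcd(n, n-2, k-1), and the parity hypothesis says exactly that g = 1.
Hence B is τ-stable, i.e. B is everything.
-/

open Equiv Equiv.Perm MulAction
open scoped Pointwise

theorem Subgroup.pow_gcd_mem {G : Type*} [Group G] (S : Subgroup G) {g : G} {a b : ℕ}
    (ha : g ^ a ∈ S) (hb : g ^ b ∈ S) : g ^ a.gcd b ∈ S := by
  rw [← zpow_natCast, Nat.gcd_eq_gcd_ab, zpow_add, zpow_mul, zpow_mul, zpow_natCast, zpow_natCast]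
  exact S.mul_mem (S.zpow_mem ha _) (S.zpow_mem hb _)

theorem Nat.gcd_gcd_sub_two_sub_one_eq_one {n k : ℕ} (hn : 2 ≤ n) (hk : 1 ≤ k)
    (h : (Even n ∧ Even k) ∨ Odd n) : (n.gcd (n - 2)).gcd (k - 1) = 1 := by
  set d := (n.gcd (n - 2)).gcd (k - 1)
  have hdn : d ∣ n := (Nat.gcd_dvd_left _ _).trans (Nat.gcd_dvd_left _ _)
  have hdn2 : d ∣ n - 2 := (Nat.gcd_dvd_left _ _).trans (Nat.gcd_dvd_right _ _)
  have hdk : d ∣ k - 1 := Nat.gcd_dvd_right _ _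
  have hd2 : d ∣ 2 := by simpa [Nat.sub_sub_self hn] using Nat.dvd_sub hdn hdn2
  rcases (Nat.dvd_prime Nat.prime_two).mp hd2 with hd | hd
  · exact hd
  · rw [hd] at hdn hdk
    rcases h with ⟨-, ⟨j, rfl⟩⟩ | ⟨j, rfl⟩ <;> omega

theorem MulAction.IsBlock.smul_eq_of_card_support_lt {α : Type*} [Fintype α] [DecidableEq α]
    {H : Subgroup (Perm α)} {B : Set α} (hB : IsBlock H B) {g : H}
    (hg : (g : Perm α).support.card < 2 * B.ncard) : g • B = B := by
  by_contra hne
  have hdisj : Disjoint (g • B) B := hB.disjoint_smul_of_ne hne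
  have hB_supp : ∀ x ∈ B, (g : Perm α) x ≠ x := fun x hx hfix =>
    hdisj.ne_of_mem (Set.smul_mem_smul_set hx) hx hfix
  have hsub : g • B ∪ B ⊆ ((g : Perm α).support : Set α) := by
    rintro _ (⟨x, hx, rfl⟩ | hx)
    · exact apply_mem_support.mpr (mem_support.mpr (hB_supp x hx))
    · exact mem_support.mpr (hB_supp _ hx)
  have := Set.ncard_le_ncard hsub
  rw [Set.ncard_union_eq hdisj, Set.ncard_smul_set, Set.ncard_coe_finset] at this
  omega

theorem val_finRotate_apply {n : ℕ} (i : Fin n) :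
    (finRotate n i : ℕ) = if (i : ℕ) + 1 = n then 0 else (i : ℕ) + 1 := by
  obtain ⟨m, rfl⟩ : ∃ m, n = m + 1 := ⟨n - 1, by have := i.pos; omega⟩
  rw [coe_finRotate]
  simp only [Fin.ext_iff, Fin.val_last]
  split_ifs <;> omega

theorem val_finRotate_pow_apply {n : ℕ} (m : ℕ) (i : Fin n) :
    ((finRotate n ^ m) i : ℕ) = (i + m) % n := by
  induction m with
  | zero => exact (Nat.mod_eq_of_lt i.isLt).symm
  | succ m ih =>
    have hlt : (i + m) % n < n := Nat.mod_lt _ i.pos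
    rw [pow_succ', Perm.mul_apply, val_finRotate_apply, ih, ← Nat.add_assoc,
      ← Nat.mod_add_mod (i + m) n 1]
    split_ifs with h
    · rw [h, Nat.mod_self]
    · exact (Nat.mod_eq_of_lt (by omega)).symm

theorem isPretransitive_of_finRotate_mem {n : ℕ} {H : Subgroup (Perm (Fin n))}
    (hτ : finRotate n ∈ H) : IsPretransitive H (Fin n) where
  exists_smul_eq x y := ⟨⟨_, H.pow_mem hτ (y + n - x)⟩, Fin.ext <| by
    rw [Subgroup.mk_smul, Perm.smul_def, val_finRotate_pow_apply,
      show (x : ℕ) + (y + n - x) = y + n by omega, Nat.add_mod_right, Nat.mod_eq_of_lt y.isLt]⟩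

theorem MulAction.IsBlock.eq_univ_of_finRotate_mem {n : ℕ} [NeZero n]
    {H : Subgroup (Perm (Fin n))} (hτ : finRotate n ∈ H) {B : Set (Fin n)} (hB : IsBlock H B)
    (h0 : 0 ∈ B) {a b : Fin n} (ha : a ∈ B) (hb : b ∈ B) (hab : (n.gcd a).gcd b = 1) :
    B = Set.univ := by
  set τ : H := ⟨finRotate n, hτ⟩
  have hτ_pow : ∀ (m : ℕ) (i : Fin n), ((τ ^ m • i : Fin n) : ℕ) = (i + m) % n :=
    fun m i => val_finRotate_pow_apply m i
  have hstab : ∀ x ∈ B, τ ^ (x : ℕ) ∈ stabilizer H B := fun x hx =>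
    hB.smul_eq_of_mem h0 (by
      convert hx
      rw [Fin.ext_iff, hτ_pow, Fin.val_zero, Nat.zero_add, Nat.mod_eq_of_lt x.isLt])
  have hτn : τ ^ n ∈ stabilizer H B := by
    convert (stabilizer H B).one_mem
    refine Subtype.ext (Equiv.ext fun i => Fin.ext ?_)
    exact (hτ_pow n i).trans (by rw [Nat.add_mod_right, Nat.mod_eq_of_lt i.isLt]; rfl)
  have hτB : τ ∈ stabilizer H B := by
    simpa [hab] using (stabilizer H B).pow_gcd_mem ((stabilizer H B).pow_gcd_mem hτn (hstab a ha))
      (hstab b hb)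
  refine Set.eq_univ_of_forall fun x => ?_
  have hx : τ ^ (x : ℕ) • (0 : Fin n) ∈ τ ^ (x : ℕ) • B := Set.smul_mem_smul_set h0
  rwa [(stabilizer H B).pow_mem hτB _, show τ ^ (x : ℕ) • (0 : Fin n) = x from Fin.ext (by
    rw [hτ_pow, Fin.val_zero, Nat.zero_add, Nat.mod_eq_of_lt x.isLt])] at hx

theorem isPreprimitive_of_finRotate_mem_of_isThreeCycle {n : ℕ} [NeZero n]
    {H : Subgroup (Perm (Fin n))} (hτ : finRotate n ∈ H) {c : Perm (Fin n)}
    (hc : c.IsThreeCycle) (hcH : c ∈ H) {a b : Fin n} (hc0 : c 0 = a) (hca : c a = b)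
    (hab : (n.gcd a).gcd b = 1) : IsPreprimitive H (Fin n) := by
  have := isPretransitive_of_finRotate_mem hτ
  refine .of_isTrivialBlock_base 0 fun {B} h0 hB => ?_
  rcases le_or_gt B.ncard 1 with hB1 | hB1
  · exact Or.inl (Set.ncard_le_one_iff_subsingleton.mp hB1)
  · have hcB : (⟨c, hcH⟩ : H) • B = B :=
      hB.smul_eq_of_card_support_lt (by rw [Subgroup.coe_mk, hc.card_support]; omega)
    have hc_mem : ∀ x ∈ B, c x ∈ B := fun x hx => hcB ▸ Set.smul_mem_smul_set hx
    have ha : a ∈ B := hc0 ▸ hc_mem 0 h0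
    exact Or.inr (hB.eq_univ_of_finRotate_mem hτ h0 ha (hca ▸ hc_mem a ha) hab)

theorem val_otFlip_apply {n k : ℕ} (hk : k ≤ n) (i : Fin n) :
    (otFlip n k i : ℕ) = if (i : ℕ) < k then k - 1 - i else i := by
  by_cases h : (i : ℕ) < k <;> simp [otFlip, h, hk]

theorem val_otFlip_mul_finRotate_apply {n k : ℕ} (hk : k ≤ n) (i : Fin n) :
    ((otFlip n k * finRotate n) i : ℕ) =
      if (i : ℕ) + 1 < k then k - 2 - i else if (i : ℕ) + 1 = n then k - 1 else (i : ℕ) + 1 := by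
  rw [Perm.mul_apply, val_otFlip_apply hk, val_finRotate_apply]
  split_ifs <;> omega

theorem val_finRotate_mul_otFlip_apply {n k : ℕ} (hk : k < n) (i : Fin n) :
    ((finRotate n * otFlip n k) i : ℕ) =
      if (i : ℕ) < k then k - i else if (i : ℕ) + 1 = n then 0 else (i : ℕ) + 1 := by
  rw [Perm.mul_apply, val_finRotate_apply, val_otFlip_apply hk.le]
  split_ifs <;> omega

theorem val_swap_mul_swap_apply {n : ℕ} [NeZero n] {a b : Fin n} (hab : (a : ℕ) ≠ b)
    (hb : (b : ℕ) ≠ 0) (i : Fin n) :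
    ((swap 0 a * swap 0 b) i : ℕ) =
      if (i : ℕ) = 0 then (b : ℕ) else if (i : ℕ) = b then (a : ℕ)
        else if (i : ℕ) = a then 0 else (i : ℕ) := by
  have h0 : ((0 : Fin n) : ℕ) = 0 := Fin.val_zero n
  simp only [Perm.mul_apply, swap_apply_def, Fin.ext_iff]
  split_ifs <;> omega

theorem otFlip_mul_finRotate_sq {n k : ℕ} [NeZero n] (hk1 : 1 < k) (hk2 : k < n - 1)
    {a b : Fin n} (ha : (a : ℕ) = k - 1) (hb : (b : ℕ) = n - 2) :
    (otFlip n k * finRotate n) ^ 2 = (finRotate n * otFlip n k) ^ 2 * (swap 0 a * swap 0 b) := by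
  have hk : k < n := by omega
  refine Equiv.ext fun i => Fin.ext ?_
  show ((otFlip n k * finRotate n) ((otFlip n k * finRotate n) i) : ℕ) =
    ((finRotate n * otFlip n k) ((finRotate n * otFlip n k) ((swap 0 a * swap 0 b) i)) : ℕ)
  have hc := val_swap_mul_swap_apply (a := a) (b := b) (by omega) (by omega) i
  generalize (swap 0 a * swap 0 b) i = j at hc ⊢
  have hl₁ := val_otFlip_mul_finRotate_apply hk.le i
  generalize (otFlip n k * finRotate n) i = x at hl₁ ⊢
  have hl₂ := val_otFlip_mul_finRotate_apply hk.le x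
  have hr₁ := val_finRotate_mul_otFlip_apply hk j
  generalize (finRotate n * otFlip n k) j = y at hr₁ ⊢
  have hr₂ := val_finRotate_mul_otFlip_apply hk y
  have := i.isLt
  have := x.isLt
  have := j.isLt
  have := y.isLt
  split_ifs at hc <;> split_ifs at hl₁ <;> split_ifs at hl₂ <;> split_ifs at hr₁ <;>
    split_ifs at hr₂ <;> omega

theorem stmt17 (n k : ℕ) (hn : 4 ≤ n) (hk1 : 1 < k) (hk2 : k < n - 1)
    (h : (Even n ∧ Even k) ∨ Odd n) :
    alternatingGroup (Fin n) ≤ Subgroup.closure {finRotate n, otFlip n k} := by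
  have : NeZero n := ⟨by omega⟩
  set H := Subgroup.closure {finRotate n, otFlip n k}
  have hτ : finRotate n ∈ H := Subgroup.subset_closure (Set.mem_insert _ _)
  have hφ : otFlip n k ∈ H := Subgroup.subset_closure (Set.mem_insert_of_mem _ rfl)
  obtain ⟨a, ha⟩ : ∃ a : Fin n, (a : ℕ) = k - 1 := ⟨⟨k - 1, by omega⟩, rfl⟩
  obtain ⟨b, hb⟩ : ∃ b : Fin n, (b : ℕ) = n - 2 := ⟨⟨n - 2, by omega⟩, rfl⟩
  have h0a : (0 : Fin n) ≠ a := Fin.ne_of_val_ne (by rw [Fin.val_zero]; omega)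
  have h0b : (0 : Fin n) ≠ b := Fin.ne_of_val_ne (by rw [Fin.val_zero]; omega)
  have hab : a ≠ b := Fin.ne_of_val_ne (by omega)
  have hc : (swap 0 a * swap 0 b).IsThreeCycle := isThreeCycle_swap_mul_swap_same h0a h0b hab
  have hcH : swap 0 a * swap 0 b ∈ H := by
    rw [eq_inv_mul_of_mul_eq (otFlip_mul_finRotate_sq hk1 hk2 ha hb).symm]
    exact H.mul_mem (H.inv_mem (H.pow_mem (H.mul_mem hτ hφ) 2)) (H.pow_mem (H.mul_mem hφ hτ) 2)
  have hc0 : (swap 0 a * swap 0 b) 0 = b := by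
    rw [Perm.mul_apply, swap_apply_left, swap_apply_of_ne_of_ne h0b.symm hab.symm]
  have hcb : (swap 0 a * swap 0 b) b = a := by
    rw [Perm.mul_apply, swap_apply_right, swap_apply_left]
  exact alternatingGroup_le_of_isPreprimitive_of_isThreeCycle_mem
    (isPreprimitive_of_finRotate_mem_of_isThreeCycle hτ hc hcH hc0 hcb
      (by rw [ha, hb]; exact Nat.gcd_gcd_sub_two_sub_one_eq_one (by omega) (by omega) h)) hc hcH
end
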